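/- (Step 4 of the proof of Theorem 1.) Under the standing hypotheses, for all indices h_1, h_2 with 1 ≤ h_1 < h_2 ≤ K and every item j ∈ {1, …, J}: θ_{j, e_{h_1}+e_{h_2}} = θ̄_{j, e_{h_1}+e_{h_2}}, and moreover p_{e_{h_1}+e_{h_2}} = p̄_{e_{h_1}+e_{h_2}} (here e_{h_1}+e_{h_2} denotes the attribute profile having 1 exactly in coordinates h_1 and h_2). -/

import Mathlib

open Finset

/-- `u ⪰ v`: componentwise domination of binary vectors. -/
def dominates {n : ℕ} (u v : Fin n → Bool) : Prop := ∀ i, v i = true → u i = true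

instance {n : ℕ} (u v : Fin n → Bool) : Decidable (dominates u v) :=
  inferInstanceAs (Decidable (∀ i, v i = true → u i = true))

/-- The all-zeros attribute profile. -/
def allZero (K : ℕ) : Fin K → Bool := fun _ => false

/-- The all-ones attribute profile. -/
def allOne (K : ℕ) : Fin K → Bool := fun _ => true

/-- The `k`-th standard basis attribute profile `e_k`. -/
def basis {K : ℕ} (k : Fin K) : Fin K → Bool := fun i => decide (i = k)

/-- `P(R = r | Q, Θ, p) = Σ_α p_α ∏_j θ_{j,α}^{r_j} (1-θ_{j,α})^{1-r_j}`. -/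
def respProb {J K : ℕ} (θ : Fin J → (Fin K → Bool) → ℝ) (p : (Fin K → Bool) → ℝ)
    (r : Fin J → Bool) : ℝ :=
  ∑ α : Fin K → Bool, p α * ∏ j, (if r j then θ j α else 1 - θ j α)

/-- The `(r, α)` entry of the T-matrix: `t_{r,α}(Θ) = ∏_{j : r_j = 1} θ_{j,α}`. -/
def tEntry {J K : ℕ} (θ : Fin J → (Fin K → Bool) → ℝ) (r : Fin J → Bool)
    (α : Fin K → Bool) : ℝ :=
  ∏ j, (if r j then θ j α else 1)

/-- The `r`-entry of the vector `T(Q,Θ) p`. -/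
def Tp {J K : ℕ} (θ : Fin J → (Fin K → Bool) → ℝ) (p : (Fin K → Bool) → ℝ)
    (r : Fin J → Bool) : ℝ :=
  ∑ α : Fin K → Bool, tEntry θ r α * p α

/-- All item parameters lie in the open unit interval. -/
def ThetaValid {J K : ℕ} (θ : Fin J → (Fin K → Bool) → ℝ) : Prop :=
  ∀ j α, θ j α ∈ Set.Ioo (0 : ℝ) 1

/-- A valid class distribution: every `p_α ∈ (0,1)` and `Σ_α p_α = 1`. -/
def PValid {K : ℕ} (p : (Fin K → Bool) → ℝ) : Prop :=
  (∀ α, p α ∈ Set.Ioo (0 : ℝ) 1) ∧ ∑ α : Fin K → Bool, p α = 1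

/-- Model restriction (R1) with respect to the Q-matrix `Q`. -/
def R1 {J K : ℕ} (Q : Fin J → Fin K → Bool) (θ : Fin J → (Fin K → Bool) → ℝ) : Prop :=
  ∀ j : Fin J,
    (∀ α α' : Fin K → Bool, dominates α (Q j) → dominates α' (Q j) → θ j α = θ j α') ∧
    (∀ αs α' : Fin K → Bool, dominates αs (Q j) → θ j α' ≤ θ j αs) ∧
    (∀ α' : Fin K → Bool, θ j (allZero K) ≤ θ j α')

/-- Model restriction (R2) with respect to the Q-matrix `Q`. -/
def R2 {J K : ℕ} (Q : Fin J → Fin K → Bool) (θ : Fin J → (Fin K → Bool) → ℝ) : Prop :=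
  ∀ (k : Fin K) (j : Fin J), Q j = basis k →
    ∀ α : Fin K → Bool, α k = false → θ j α < θ j (allOne K)

/-- Condition (C1): the first `2K` rows of `Q` form two copies of the identity. -/
def C1 {J K : ℕ} (Q : Fin J → Fin K → Bool) : Prop :=
  ∀ (k : Fin K) (h1 : (k : ℕ) < J) (h2 : K + (k : ℕ) < J),
    Q ⟨k, h1⟩ = basis k ∧ Q ⟨K + (k : ℕ), h2⟩ = basis k

/-- Condition (C2): for every `k`, `(θ_{j,e_k})_{j > 2K} ≠ (θ_{j,0})_{j > 2K}`. -/
def C2 {J K : ℕ} (θ : Fin J → (Fin K → Bool) → ℝ) : Prop :=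
  ∀ k : Fin K, ∃ j : Fin J, 2 * K ≤ (j : ℕ) ∧ θ j (basis k) ≠ θ j (allZero K)

/-!
The identity `T(Q,Θ)p = T(Q,Θ̄)p̄` says, multilinearly, that
`Σ_α p_α ∏_{j ∈ S} (θ_{j,α} - x_j)` is the same for both models, for every set `S` of items and all
shifts `x`. A factor vanishes when `x_j` is a value of `θ_{j,·}`, so well-chosen shifts kill every
latent class but one, and the identity then compares the two models at that class. An item of the
identity blocks is at its top value exactly on the classes containing its attribute; shifting one
copy by the top of `Θ` and the other by the top of `Θ̄` kills these classes in both models at once.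
Such isolations show in turn that the low values of the identity items agree, that their top values
agree (a mismatch would start a descent over classes ending in a contradiction), and then that the
two models agree at each class `e_k` and finally at `e_{h₁} + e_{h₂}`.
-/

section Moments

variable {J K : ℕ} {θ θb : Fin J → (Fin K → Bool) → ℝ} {p pb : (Fin K → Bool) → ℝ}

theorem sum_mul_prod_sub_eq_sum_powerset (θ : Fin J → (Fin K → Bool) → ℝ)
    (p : (Fin K → Bool) → ℝ) (S : Finset (Fin J)) (x : Fin J → ℝ) :
    ∑ α, p α * ∏ j ∈ S, (θ j α - x j) =
      ∑ T ∈ S.powerset, (∏ j ∈ S \ T, -x j) * Tp θ p (fun j => decide (j ∈ T)) := by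
  have htEntry : ∀ T α, tEntry θ (fun j => decide (j ∈ T)) α = ∏ j ∈ T, θ j α := by
    intro T α
    simp [tEntry, Finset.prod_ite_mem]
  calc ∑ α, p α * ∏ j ∈ S, (θ j α - x j)
      = ∑ α, ∑ T ∈ S.powerset, p α * ((∏ j ∈ T, θ j α) * ∏ j ∈ S \ T, -x j) := by
        simp_rw [sub_eq_add_neg, Finset.prod_add, Finset.mul_sum]
    _ = ∑ T ∈ S.powerset, (∏ j ∈ S \ T, -x j) * Tp θ p (fun j => decide (j ∈ T)) := by
        rw [Finset.sum_comm]
        refine Finset.sum_congr rfl fun T _ => ?_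
        simp_rw [Tp, htEntry, Finset.mul_sum]
        exact Finset.sum_congr rfl fun α _ => by ring

theorem sum_mul_prod_sub_eq_of_Tp_eq (hT : ∀ r, Tp θ p r = Tp θb pb r) (S : Finset (Fin J))
    (x : Fin J → ℝ) :
    ∑ α, p α * ∏ j ∈ S, (θ j α - x j) = ∑ α, pb α * ∏ j ∈ S, (θb j α - x j) := by
  simp only [sum_mul_prod_sub_eq_sum_powerset, hT]

variable {S : Finset (Fin J)} {x : Fin J → ℝ} {β : Fin K → Bool}

theorem sum_mul_prod_sub_eq_single (hk : ∀ α ≠ β, ∃ j ∈ S, θ j α = x j) :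
    ∑ α, p α * ∏ j ∈ S, (θ j α - x j) = p β * ∏ j ∈ S, (θ j β - x j) :=
  Fintype.sum_eq_single β fun α hα => by
    obtain ⟨j, hj, h⟩ := hk α hα
    rw [Finset.prod_eq_zero hj (sub_eq_zero.2 h), mul_zero]

theorem exists_eq_of_isolates (hT : ∀ r, Tp θ p r = Tp θb pb r) (hp : 0 < p β)
    (hk : ∀ α ≠ β, ∃ j ∈ S, θ j α = x j) (hkb : ∀ α, ∃ j ∈ S, θb j α = x j) :
    ∃ j ∈ S, θ j β = x j := by
  by_contra! hne
  have h := sum_mul_prod_sub_eq_of_Tp_eq hT S x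
  rw [sum_mul_prod_sub_eq_single hk, Finset.sum_eq_zero fun α _ => ?_] at h
  · exact mul_ne_zero hp.ne' (Finset.prod_ne_zero_iff.2 fun j hj => sub_ne_zero.2 (hne j hj)) h
  · obtain ⟨j, hj, h⟩ := hkb α
    rw [Finset.prod_eq_zero hj (sub_eq_zero.2 h), mul_zero]

theorem mul_prod_sub_eq_of_isolates (hT : ∀ r, Tp θ p r = Tp θb pb r)
    (hk : ∀ α ≠ β, (∃ j ∈ S, θ j α = x j) ∧ ∃ j ∈ S, θb j α = x j) :
    p β * ∏ j ∈ S, (θ j β - x j) = pb β * ∏ j ∈ S, (θb j β - x j) := by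
  rw [← sum_mul_prod_sub_eq_single fun α hα => (hk α hα).1,
    ← sum_mul_prod_sub_eq_single fun α hα => (hk α hα).2]
  exact sum_mul_prod_sub_eq_of_Tp_eq hT S x

theorem eq_of_isolates (hT : ∀ r, Tp θ p r = Tp θb pb r)
    (hk : ∀ α ≠ β, (∃ j ∈ S, θ j α = x j) ∧ ∃ j ∈ S, θb j α = x j)
    (hβ : ∀ j ∈ S, θ j β ≠ x j) (hp : 0 < p β) {j : Fin J} (hj : j ∉ S) :
    θ j β = θb j β := by
  have hS := mul_prod_sub_eq_of_isolates hT hk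
  have hjS := mul_prod_sub_eq_of_isolates hT (S := insert j S) fun α hα =>
    ⟨(hk α hα).1.imp fun _ h => ⟨Finset.mem_insert_of_mem h.1, h.2⟩,
      (hk α hα).2.imp fun _ h => ⟨Finset.mem_insert_of_mem h.1, h.2⟩⟩
  rw [Finset.prod_insert hj, Finset.prod_insert hj] at hjS
  have hne : p β * ∏ i ∈ S, (θ i β - x i) ≠ 0 :=
    mul_ne_zero hp.ne' (Finset.prod_ne_zero_iff.2 fun i hi => sub_ne_zero.2 (hβ i hi))
  have h : (p β * ∏ i ∈ S, (θ i β - x i)) * (θ j β - θb j β) = 0 := by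
    linear_combination hjS - (θb j β - x j) * hS
  exact sub_eq_zero.1 ((mul_eq_zero.1 h).resolve_left hne)

end Moments

section Profiles

variable {K : ℕ} {α β : Fin K → Bool}

theorem basis_self (k : Fin K) : basis k k = true := by simp [basis]

theorem basis_of_ne {i k : Fin K} (h : i ≠ k) : basis k i = false := by simp [basis, h]

theorem ne_of_basis_eq_false {ν κ : Fin K} (h : basis κ ν = false) : ν ≠ κ := by
  rintro rfl
  simp [basis_self] at h

theorem exists_eq_true_of_ne_allZero (h : α ≠ allZero K) : ∃ ν, α ν = true := by
  by_contra! h'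
  exact h (funext fun ν => by simpa [allZero] using h' ν)

theorem exists_eq_false_and_eq_true_of_not_le (h : ¬α ≤ β) : ∃ ν, β ν = false ∧ α ν = true := by
  simp only [Pi.le_def, not_forall] at h
  obtain ⟨ν, hν⟩ := h
  exact ⟨ν, by revert hν; cases α ν <;> cases β ν <;> decide⟩

theorem eq_allZero_or_eq_basis_of_le_basis {κ : Fin K} (h : α ≤ basis κ) :
    α = allZero K ∨ α = basis κ := by
  have hoff : ∀ ν, ν ≠ κ → α ν = false := fun ν hν => by
    have := h ν
    rw [basis_of_ne hν] at this
    exact Bool.eq_false_iff.2 fun h' => Bool.false_ne_true (Bool.le_iff_imp.1 this h')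
  cases hκ : α κ
  · left; funext ν
    by_cases hν : ν = κ
    · subst hν; exact hκ
    · exact hoff ν hν
  · right; funext ν
    by_cases hν : ν = κ
    · subst hν; rw [hκ, basis_self]
    · rw [hoff ν hν, basis_of_ne hν]

theorem eq_of_le_pair {h1 h2 : Fin K} (h : α ≤ fun i => basis h1 i || basis h2 i) :
    α = allZero K ∨ α = basis h1 ∨ α = basis h2 ∨ α = fun i => basis h1 i || basis h2 i := by
  have key : ∀ ν, α ν = ((α h1 && basis h1 ν) || (α h2 && basis h2 ν)) := by
    intro ν
    by_cases hν1 : ν = h1 <;> by_cases hν2 : ν = h2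
    · subst hν1 hν2
      simp [basis_self]
    · subst hν1
      simp [basis_self, basis_of_ne hν2]
    · subst hν2
      simp [basis_self, basis_of_ne hν1]
    · have := Bool.le_iff_imp.1 (h ν)
      simp_all [basis_of_ne]
  have hα : α = fun ν => (α h1 && basis h1 ν) || (α h2 && basis h2 ν) := funext key
  generalize α h1 = a, α h2 = b at hα
  subst hα
  cases a <;> cases b
  · exact Or.inl rfl
  all_goals simp

end Profiles

section Restrictions

variable {J K : ℕ} {Q : Fin J → Fin K → Bool} {θ θb : Fin J → (Fin K → Bool) → ℝ}
  {p pb : (Fin K → Bool) → ℝ} {j : Fin J} {k : Fin K} {α : Fin K → Bool}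

theorem R1.eq_top (h : R1 Q θ) (hQ : Q j = basis k) (hα : α k = true) :
    θ j α = θ j (allOne K) :=
  (h j).1 α (allOne K) (fun i hi => by rw [hQ, basis, decide_eq_true_iff] at hi; rwa [hi])
    fun _ _ => rfl

theorem R1.bot_le (h : R1 Q θ) (j : Fin J) (α : Fin K → Bool) : θ j (allZero K) ≤ θ j α :=
  (h j).2.2 α

theorem R1.le_top (h : R1 Q θ) (j : Fin J) (α : Fin K → Bool) : θ j α ≤ θ j (allOne K) :=
  (h j).2.1 (allOne K) α fun _ _ => rfl

theorem R2.lt_top (h : R2 Q θ) (hQ : Q j = basis k) (hα : α k = false) :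
    θ j α < θ j (allOne K) :=
  h k j hQ α hα

/-- Compare the single-item identity at the shift `θ̄_{j,1}`: its left side is `≥ 0` if
`θ_{j,0} ≥ θ̄_{j,1}`, while its right side is `< 0`. -/
theorem bot_lt_top_of_Tp_eq (hT : ∀ r, Tp θ p r = Tp θb pb r) (hp : ∀ α, 0 ≤ p α)
    (hpb : ∀ α, 0 < pb α) (hR1 : R1 Q θ) (hR1b : R1 Q θb) (hR2b : R2 Q θb)
    (hQ : Q j = basis k) : θ j (allZero K) < θb j (allOne K) := by
  by_contra! hle
  have h := sum_mul_prod_sub_eq_of_Tp_eq hT {j} fun _ => θb j (allOne K)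
  simp only [Finset.prod_singleton] at h
  have hL : 0 ≤ ∑ α, p α * (θ j α - θb j (allOne K)) :=
    Finset.sum_nonneg fun α _ => mul_nonneg (hp α) (by linarith [hR1.bot_le j α])
  have hR : 0 < ∑ α, pb α * (θb j (allOne K) - θb j α) :=
    Finset.sum_pos' (fun α _ => mul_nonneg (hpb α).le (by linarith [hR1b.le_top j α]))
      ⟨allZero K, Finset.mem_univ _,
        mul_pos (hpb _) (by linarith [hR2b.lt_top (α := allZero K) hQ rfl])⟩
  have hneg : ∑ α, pb α * (θb j (allOne K) - θb j α) =
      -∑ α, pb α * (θb j α - θb j (allOne K)) := by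
    rw [← Finset.sum_neg_distrib]
    exact Finset.sum_congr rfl fun _ _ => by ring
  linarith

end Restrictions

section Items

variable {J K : ℕ}

def structItems (J K : ℕ) : Finset (Fin J) := Finset.univ.filter fun j => (j : ℕ) < 2 * K

/-- The shift `f s k` on the `k`-th item of copy `s` of the identity block, `g j` elsewhere. -/
def structShift (f : Bool → Fin K → ℝ) (g : Fin J → ℝ) (j : Fin J) : ℝ :=
  if h : (j : ℕ) < 2 * K then f (decide (K ≤ (j : ℕ))) ⟨j % K, Nat.mod_lt _ (by omega)⟩
  else g j

theorem structShift_of_le {f : Bool → Fin K → ℝ} {g : Fin J → ℝ} {j : Fin J}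
    (h : 2 * K ≤ (j : ℕ)) : structShift f g j = g j :=
  dif_neg (by omega)

theorem notMem_structItems {j : Fin J} (hj : 2 * K ≤ (j : ℕ)) : j ∉ structItems J K := by
  simp only [structItems, Finset.mem_filter, Finset.mem_univ, true_and]
  omega

end Items

structure StandingHyps {J K : ℕ} (Q : Fin J → Fin K → Bool) (θ θb : Fin J → (Fin K → Bool) → ℝ)
    (p pb : (Fin K → Bool) → ℝ) : Prop where
  two_mul_le : 2 * K ≤ J
  c1 : C1 Q
  c2 : C2 θ
  r1 : R1 Q θ
  r1b : R1 Q θb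
  r2 : R2 Q θ
  r2b : R2 Q θb
  p_pos : ∀ α, 0 < p α
  pb_pos : ∀ α, 0 < pb α
  Tp_eq : ∀ r, Tp θ p r = Tp θb pb r

namespace StandingHyps

variable {J K : ℕ} {Q : Fin J → Fin K → Bool} {θ θb : Fin J → (Fin K → Bool) → ℝ}
  {p pb : (Fin K → Bool) → ℝ} (H : StandingHyps Q θ θb p pb)

def item (s : Bool) (k : Fin K) : Fin J :=
  ⟨bif s then K + k else k, by have := H.two_mul_le; cases s <;> simp <;> omega⟩

def copyItems (s : Bool) : Finset (Fin J) := Finset.univ.image (H.item s)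

theorem Q_item (s : Bool) (k : Fin K) : Q (H.item s k) = basis k := by
  have h := H.c1 k (H.item false k).2 (H.item true k).2
  cases s
  exacts [h.1, h.2]

theorem item_inj {s t : Bool} {k l : Fin K} : H.item s k = H.item t l ↔ s = t ∧ k = l := by
  refine ⟨fun h => ?_, fun h => by rw [h.1, h.2]⟩
  have h' := congrArg Fin.val h
  have := k.2; have := l.2
  cases s <;> cases t <;> simp only [item, cond_false, cond_true] at h' <;>
    first | omega | exact ⟨rfl, Fin.ext (by omega)⟩

theorem item_mem_copyItems_iff {s t : Bool} {k : Fin K} :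
    H.item s k ∈ H.copyItems t ↔ s = t := by
  simp only [copyItems, Finset.mem_image, Finset.mem_univ, true_and, H.item_inj]
  exact ⟨fun ⟨_, h⟩ => h.1.symm, fun h => ⟨k, h.symm, rfl⟩⟩

theorem item_mem_structItems (s : Bool) (k : Fin K) : H.item s k ∈ structItems J K := by
  have := k.2
  simp only [structItems, Finset.mem_filter, Finset.mem_univ, true_and, item]
  cases s <;> simp <;> omega

theorem copyItems_subset (s : Bool) : H.copyItems s ⊆ structItems J K := by
  intro j hj
  obtain ⟨k, -, rfl⟩ := Finset.mem_image.1 hj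
  exact H.item_mem_structItems s k

theorem exists_item_eq {j : Fin J} (hj : (j : ℕ) < 2 * K) : ∃ s k, H.item s k = j := by
  by_cases h : (j : ℕ) < K
  · exact ⟨false, ⟨j, h⟩, Fin.ext rfl⟩
  · exact ⟨true, ⟨j - K, by omega⟩, Fin.ext (by simp [item]; omega)⟩

theorem exists_item_eq_of_mem {j : Fin J} (hj : j ∈ structItems J K) : ∃ s k, H.item s k = j :=
  H.exists_item_eq (Finset.mem_filter.1 hj).2

theorem exists_notMem_copyItems (j : Fin J) : ∃ s, j ∉ H.copyItems s := by
  by_cases hj : (j : ℕ) < 2 * K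
  · obtain ⟨s, k, rfl⟩ := H.exists_item_eq hj
    exact ⟨!s, by simp [item_mem_copyItems_iff]⟩
  · exact ⟨false, fun h => notMem_structItems (by omega) (H.copyItems_subset false h)⟩

theorem structShift_item (f : Bool → Fin K → ℝ) (g : Fin J → ℝ) (s : Bool) (k : Fin K) :
    structShift f g (H.item s k) = f s k := by
  have hk := k.2
  unfold structShift
  rw [dif_pos (by cases s <;> simp [item] <;> omega)]
  cases s
  · simp [item, Nat.mod_eq_of_lt hk, Nat.not_le.2 hk]
  · simp [item, Nat.add_mod_left, Nat.mod_eq_of_lt hk]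

variable {α β : Fin K → Bool} {s : Bool} {ν : Fin K}

theorem item_eq_top (hα : α ν = true) : θ (H.item s ν) α = θ (H.item s ν) (allOne K) :=
  H.r1.eq_top (H.Q_item s ν) hα

theorem item_eq_top' (hα : α ν = true) : θb (H.item s ν) α = θb (H.item s ν) (allOne K) :=
  H.r1b.eq_top (H.Q_item s ν) hα

theorem item_lt_top (hα : α ν = false) : θ (H.item s ν) α < θ (H.item s ν) (allOne K) :=
  H.r2.lt_top (H.Q_item s ν) hα

theorem bot_lt_top_bar (s : Bool) (ν : Fin K) :
    θ (H.item s ν) (allZero K) < θb (H.item s ν) (allOne K) :=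
  bot_lt_top_of_Tp_eq H.Tp_eq (fun α => (H.p_pos α).le) H.pb_pos H.r1 H.r1b H.r2b (H.Q_item s ν)

theorem exists_mem_eq_structShift {θ' : Fin J → (Fin K → Bool) → ℝ} {S : Finset (Fin J)}
    {f : Bool → Fin K → ℝ} (g : Fin J → ℝ) (hS : H.item s ν ∈ S)
    (h : θ' (H.item s ν) α = f s ν) : ∃ j ∈ S, θ' j α = structShift f g j :=
  ⟨_, hS, by rw [H.structShift_item, h]⟩

theorem forall_structItems_ne {θ' : Fin J → (Fin K → Bool) → ℝ} {f : Bool → Fin K → ℝ}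
    (g : Fin J → ℝ) (h : ∀ s ν, θ' (H.item s ν) α ≠ f s ν) :
    ∀ j ∈ structItems J K, θ' j α ≠ structShift f g j := by
  intro j hj
  obtain ⟨s, ν, rfl⟩ := H.exists_item_eq_of_mem hj
  rw [H.structShift_item]
  exact h s ν

/-- Shifting copy `σ ν` of attribute `ν` by its top value in `Θ̄` and the other copy by its top
value in `Θ` kills, in both models, every class containing `ν`. -/
def killShift (σ : Fin K → Bool) (s : Bool) (ν : Fin K) : ℝ :=
  if s = σ ν then θb (H.item s ν) (allOne K) else θ (H.item s ν) (allOne K)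

theorem killShift_kill (σ : Fin K → Bool) (hα : α ν = true) :
    θ (H.item (!σ ν) ν) α = H.killShift σ (!σ ν) ν := by
  rw [killShift, if_neg (by cases σ ν <;> decide), H.item_eq_top hα]

theorem killShift_kill' (σ : Fin K → Bool) (hα : α ν = true) :
    θb (H.item (σ ν) ν) α = H.killShift σ (σ ν) ν := by
  rw [killShift, if_pos rfl, H.item_eq_top' hα]

theorem exists_killShift_kill {σ : Fin K → Bool} {f : Bool → Fin K → ℝ} (g : Fin J → ℝ)
    {S : Finset (Fin J)} (hS : ∀ t ν, H.item t ν ∈ S)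
    (hf : ∀ t ν, β ν = false → f t ν = H.killShift σ t ν) (hα : ¬α ≤ β) :
    (∃ j ∈ S, θ j α = structShift f g j) ∧ ∃ j ∈ S, θb j α = structShift f g j := by
  obtain ⟨ν, hν, hαν⟩ := exists_eq_false_and_eq_true_of_not_le hα
  exact ⟨H.exists_mem_eq_structShift g (hS _ ν) ((H.killShift_kill σ hαν).trans (hf _ ν hν).symm),
    H.exists_mem_eq_structShift g (hS _ ν) ((H.killShift_kill' σ hαν).trans (hf _ ν hν).symm)⟩

theorem bot_lt_killShift (σ : Fin K → Bool) (s : Bool) (ν : Fin K) :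
    θ (H.item s ν) (allZero K) < H.killShift σ s ν := by
  unfold killShift
  split_ifs
  exacts [H.bot_lt_top_bar s ν, H.item_lt_top rfl]

/-- A tie of `β` at `ν` is what prevents choosing `σ ν` so that `killShift σ` does not kill `β` in
`Θ` (see `exists_killShift_ne`). -/
def Tie (β : Fin K → Bool) (ν : Fin K) : Prop :=
  β ν = false ∧ ∀ s, θ (H.item s ν) β = θb (H.item s ν) (allOne K)

def TopExceeds (ν : Fin K) : Prop :=
  ∀ s, θb (H.item s ν) (allOne K) < θ (H.item s ν) (allOne K)

theorem Tie.topExceeds (h : H.Tie β ν) : H.TopExceeds ν :=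
  fun s => h.2 s ▸ H.item_lt_top h.1

theorem killShift_eq_of_tie (h : H.Tie β ν) (σ : Fin K → Bool) :
    θ (H.item (σ ν) ν) β = H.killShift σ (σ ν) ν := by
  rw [killShift, if_pos rfl]
  exact h.2 _

theorem exists_killShift_ne (h : ∀ ν, β ν = false → ¬H.Tie β ν) :
    ∃ σ : Fin K → Bool, ∀ ν, β ν = false → ∀ s, θ (H.item s ν) β ≠ H.killShift σ s ν := by
  have hsafe : ∀ ν, ∃ t, β ν = false → θ (H.item t ν) β ≠ θb (H.item t ν) (allOne K) := by
    intro ν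
    by_cases hν : β ν = false
    · have hν' := h ν hν
      simp only [Tie, hν, true_and, not_forall] at hν'
      obtain ⟨t, ht⟩ := hν'
      exact ⟨t, fun _ => ht⟩
    · exact ⟨true, fun h' => absurd h' hν⟩
  choose σ hσ using hsafe
  refine ⟨σ, fun ν hν s => ?_⟩
  unfold killShift
  split_ifs with hs
  · subst hs
    exact hσ ν hν
  · exact (H.item_lt_top hν).ne

theorem bot_eq_of_two_mul_le (H : StandingHyps Q θ θb p pb) {j : Fin J} (hj : 2 * K ≤ (j : ℕ)) :
    θ j (allZero K) = θb j (allZero K) := by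
  let σ : Fin K → Bool := fun _ => false
  refine eq_of_isolates H.Tp_eq (S := structItems J K) (x := structShift (H.killShift σ) 0)
    (fun α hα => ?_) (H.forall_structItems_ne 0 fun s ν => (H.bot_lt_killShift σ s ν).ne)
    (H.p_pos _) (notMem_structItems hj)
  exact H.exists_killShift_kill 0 H.item_mem_structItems (fun _ _ _ => rfl)
    fun h => hα (le_antisymm h fun _ => Bool.false_le _)

theorem exists_tie_basis {κ : Fin K}
    (hκ : θ (H.item s κ) (allOne K) ≠ θb (H.item s κ) (allOne K)) :
    ∃ ν, H.Tie (basis κ) ν := by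
  by_contra! hno
  obtain ⟨σ, hσ⟩ := H.exists_killShift_ne fun ν _ => hno ν
  obtain ⟨js, hjs, hC2⟩ := H.c2 κ
  -- copy `s` of `κ` kills `e_κ` in `Θ̄` only and the item `js` kills `0` in both models, so that
  -- `e_κ` alone survives, in `Θ`
  let f : Bool → Fin K → ℝ := fun t ν =>
    if ν = κ then (if t = s then θb (H.item s κ) (allOne K) else θ (H.item t κ) (allZero K))
    else H.killShift σ t ν
  set x : Fin J → ℝ := structShift f fun _ => θ js (allZero K) with hx
  have hxjs : x js = θ js (allZero K) := structShift_of_le hjs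
  have hS : ∀ t ν, H.item t ν ∈ insert js (structItems J K) := fun t ν =>
    Finset.mem_insert_of_mem (H.item_mem_structItems t ν)
  have hf : ∀ t ν, basis κ ν = false → f t ν = H.killShift σ t ν := fun t ν h =>
    if_neg (ne_of_basis_eq_false h)
  have hk : ∀ α ≠ basis κ, ∃ j ∈ insert js (structItems J K), θ j α = x j := by
    intro α hα
    by_cases hle : α ≤ basis κ
    · obtain rfl := (eq_allZero_or_eq_basis_of_le_basis hle).resolve_right hα
      exact ⟨js, Finset.mem_insert_self _ _, hxjs.symm⟩
    · exact (H.exists_killShift_kill _ hS hf hle).1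
  have hkb : ∀ α, ∃ j ∈ insert js (structItems J K), θb j α = x j := by
    intro α
    by_cases hle : α ≤ basis κ
    · rcases eq_allZero_or_eq_basis_of_le_basis hle with rfl | rfl
      · exact ⟨js, Finset.mem_insert_self _ _, by rw [hxjs, H.bot_eq_of_two_mul_le hjs]⟩
      · exact H.exists_mem_eq_structShift _ (hS s κ) (by simp [f, H.item_eq_top' (basis_self κ)])
    · exact (H.exists_killShift_kill _ hS hf hle).2
  obtain ⟨j, hj, hjx⟩ := exists_eq_of_isolates H.Tp_eq (H.p_pos (basis κ)) hk hkb
  rcases Finset.mem_insert.1 hj with rfl | hj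
  · exact hC2 (hjx.trans hxjs)
  obtain ⟨t, ν, rfl⟩ := H.exists_item_eq_of_mem hj
  rw [hx, H.structShift_item] at hjx
  by_cases hν : ν = κ
  · subst hν
    rw [H.item_eq_top (basis_self ν)] at hjx
    by_cases ht : t = s
    · subst ht
      exact hκ (by simpa [f] using hjx)
    · exact (H.item_lt_top (α := allZero K) rfl).ne' (by simpa [f, ht] using hjx)
  · exact hσ ν (basis_of_ne hν) t (hjx.trans (hf t ν (basis_of_ne hν)))

theorem bot_eq (s : Bool) (κ : Fin K) :
    θ (H.item s κ) (allZero K) = θb (H.item s κ) (allZero K) := by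
  let σ : Fin K → Bool := fun _ => false
  -- copy `s` of `κ` kills `0` in `Θ̄` and the other copy kills `e_κ` there; in `Θ` the class `e_κ`
  -- is killed by that copy too if the tops agree, and by a tie otherwise
  let f : Bool → Fin K → ℝ := fun t ν =>
    if ν = κ then (if t = s then θb (H.item s κ) (allZero K) else θb (H.item t κ) (allOne K))
    else H.killShift σ t ν
  have hf : ∀ t ν, basis κ ν = false → f t ν = H.killShift σ t ν := fun t ν h =>
    if_neg (ne_of_basis_eq_false h)
  have hS := H.item_mem_structItems
  have hk : ∀ α ≠ allZero K, ∃ j ∈ structItems J K, θ j α = structShift f 0 j := by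
    intro α hα
    by_cases hle : α ≤ basis κ
    · obtain rfl := (eq_allZero_or_eq_basis_of_le_basis hle).resolve_left hα
      by_cases htop : θ (H.item (!s) κ) (allOne K) = θb (H.item (!s) κ) (allOne K)
      · exact H.exists_mem_eq_structShift 0 (hS (!s) κ)
          (by simp [f, H.item_eq_top (basis_self κ), htop])
      · obtain ⟨ν, hν⟩ := H.exists_tie_basis htop
        exact H.exists_mem_eq_structShift 0 (hS _ ν)
          ((H.killShift_eq_of_tie hν σ).trans (hf _ ν hν.1).symm)
    · exact (H.exists_killShift_kill 0 hS hf hle).1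
  have hkb : ∀ α, ∃ j ∈ structItems J K, θb j α = structShift f 0 j := by
    intro α
    by_cases hle : α ≤ basis κ
    · rcases eq_allZero_or_eq_basis_of_le_basis hle with rfl | rfl
      · exact H.exists_mem_eq_structShift 0 (hS s κ) (by simp [f])
      · exact H.exists_mem_eq_structShift 0 (hS (!s) κ)
          (by simp [f, H.item_eq_top' (basis_self κ)])
    · exact (H.exists_killShift_kill 0 hS hf hle).2
  obtain ⟨j, hj, hjx⟩ := exists_eq_of_isolates H.Tp_eq (H.p_pos _) hk hkb
  obtain ⟨t, ν, rfl⟩ := H.exists_item_eq_of_mem hj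
  rw [H.structShift_item] at hjx
  by_cases hν : ν = κ
  · subst hν
    by_cases ht : t = s
    · subst ht
      simpa [f] using hjx
    · exact absurd (by simpa [f, ht] using hjx) (H.bot_lt_top_bar t ν).ne
  · exact absurd (hjx.trans (hf t ν (basis_of_ne hν))) (H.bot_lt_killShift σ t ν).ne

theorem exists_tie_of_forall_lt (hβ : β ≠ allZero K) (hdom : ∀ ν, β ν = true → H.TopExceeds ν)
    (ih : ∀ α < β, α ≠ allZero K → ∃ ν, H.Tie α ν) : ∃ ν, H.Tie β ν := by
  by_contra! hno
  obtain ⟨σ, hσ⟩ := H.exists_killShift_ne fun ν _ => hno ν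
  obtain ⟨ν₁, hν₁⟩ := exists_eq_true_of_ne_allZero hβ
  -- on `β`, copy `false` kills in `Θ̄` the nonzero classes below `β` and copy `true` kills `0`
  -- in both models; in `Θ` the classes strictly between `0` and `β` are killed by their ties
  let f : Bool → Fin K → ℝ := fun t ν =>
    if β ν = true then (if t then θ (H.item t ν) (allZero K) else θb (H.item t ν) (allOne K))
    else H.killShift σ t ν
  have hf : ∀ t ν, β ν = false → f t ν = H.killShift σ t ν := fun t ν h => by simp [f, h]
  have hS := H.item_mem_structItems
  have hk : ∀ α ≠ β, ∃ j ∈ structItems J K, θ j α = structShift f 0 j := by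
    intro α hα
    by_cases hle : α ≤ β
    · by_cases h0 : α = allZero K
      · subst h0
        exact H.exists_mem_eq_structShift 0 (hS true ν₁) (by simp [f, hν₁])
      obtain ⟨μ, hμ⟩ := ih α (lt_of_le_of_ne hle hα) h0
      by_cases hβμ : β μ = true
      · exact H.exists_mem_eq_structShift 0 (hS false μ) (by simp [f, hβμ, hμ.2 false])
      · exact H.exists_mem_eq_structShift 0 (hS _ μ)
          ((H.killShift_eq_of_tie hμ σ).trans (hf _ μ (by simpa using hβμ)).symm)
    · exact (H.exists_killShift_kill 0 hS hf hle).1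
  have hkb : ∀ α, ∃ j ∈ structItems J K, θb j α = structShift f 0 j := by
    intro α
    by_cases hle : α ≤ β
    · by_cases h0 : α = allZero K
      · subst h0
        exact H.exists_mem_eq_structShift 0 (hS true ν₁) (by simp [f, hν₁, H.bot_eq])
      obtain ⟨μ, hμ⟩ := exists_eq_true_of_ne_allZero h0
      exact H.exists_mem_eq_structShift 0 (hS false μ)
        (by simp [f, Bool.le_iff_imp.1 (hle μ) hμ, H.item_eq_top' hμ])
    · exact (H.exists_killShift_kill 0 hS hf hle).2
  obtain ⟨j, hj, hjx⟩ := exists_eq_of_isolates H.Tp_eq (H.p_pos β) hk hkb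
  obtain ⟨t, ν, rfl⟩ := H.exists_item_eq_of_mem hj
  rw [H.structShift_item] at hjx
  cases hβν : β ν
  · exact hσ ν hβν t (hjx.trans (hf t ν hβν))
  · rw [H.item_eq_top hβν] at hjx
    cases t
    · exact (hdom ν hβν false).ne' (by simpa [f, hβν] using hjx)
    · exact (H.item_lt_top (α := allZero K) rfl).ne' (by simpa [f, hβν] using hjx)

theorem exists_tie_of_topExceeds (β : Fin K → Bool) (hβ : β ≠ allZero K)
    (hdom : ∀ ν, β ν = true → H.TopExceeds ν) : ∃ ν, H.Tie β ν := by
  induction β using WellFoundedLT.induction with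
  | _ β ih =>
    exact H.exists_tie_of_forall_lt hβ hdom fun α hlt h0 =>
      ih α hlt h0 fun ν hν => hdom ν (Bool.le_iff_imp.1 (hlt.le ν) hν)

theorem top_eq (s : Bool) (κ : Fin K) :
    θ (H.item s κ) (allOne K) = θb (H.item s κ) (allOne K) := by
  classical
  by_contra hκ
  obtain ⟨ν₀, hν₀⟩ := H.exists_tie_basis hκ
  let β : Fin K → Bool := fun ν => decide (H.TopExceeds ν)
  have hβ : ∀ ν, β ν = true ↔ H.TopExceeds ν := fun ν => decide_eq_true_iff
  obtain ⟨μ, hμ⟩ := H.exists_tie_of_topExceeds β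
    (fun h => by simpa [h, allZero] using (hβ ν₀).2 hν₀.topExceeds) fun ν => (hβ ν).1
  simpa [hμ.1] using (hβ μ).2 hμ.topExceeds

theorem eq_basis_of_notMem {κ : Fin K} {j : Fin J} (hj : j ∉ H.copyItems s) :
    θ j (basis κ) = θb j (basis κ) := by
  let f : Bool → Fin K → ℝ := fun _ ν =>
    if ν = κ then θ (H.item s κ) (allZero K) else θ (H.item s ν) (allOne K)
  have hS : ∀ ν, H.item s ν ∈ H.copyItems s := fun ν => H.item_mem_copyItems_iff.2 rfl
  refine eq_of_isolates H.Tp_eq (S := H.copyItems s) (x := structShift f 0) (fun α hα => ?_)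
    (fun j hj => ?_) (H.p_pos _) hj
  · by_cases hle : α ≤ basis κ
    · obtain rfl := (eq_allZero_or_eq_basis_of_le_basis hle).resolve_right hα
      exact ⟨H.exists_mem_eq_structShift 0 (hS κ) (by simp [f]),
        H.exists_mem_eq_structShift 0 (hS κ) (by simp [f, H.bot_eq])⟩
    obtain ⟨ν, hν, hαν⟩ := exists_eq_false_and_eq_true_of_not_le hle
    have hνκ := ne_of_basis_eq_false hν
    exact ⟨H.exists_mem_eq_structShift 0 (hS ν) (by simp [f, hνκ, H.item_eq_top hαν]),
      H.exists_mem_eq_structShift 0 (hS ν) (by simp [f, hνκ, H.item_eq_top' hαν, H.top_eq])⟩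
  · obtain ⟨ν, -, rfl⟩ := Finset.mem_image.1 hj
    rw [H.structShift_item]
    by_cases hν : ν = κ
    · subst hν
      simpa [f, H.item_eq_top (basis_self ν)] using (H.item_lt_top (α := allZero K) rfl).ne'
    · simpa [f, hν] using (H.item_lt_top (s := s) (basis_of_ne hν)).ne

theorem eq_basis (H : StandingHyps Q θ θb p pb) (κ : Fin K) (j : Fin J) :
    θ j (basis κ) = θb j (basis κ) :=
  let ⟨_, hs⟩ := H.exists_notMem_copyItems j
  H.eq_basis_of_notMem hs

variable {h1 h2 : Fin K}

def pairKillSet (h1 : Fin K) (s : Bool) : Finset (Fin J) :=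
  insert (H.item (!s) h1) (H.copyItems s)

/-- Copy `s` at its top values kills the classes not below `e_{h₁} + e_{h₂}`; at `h₁` and `h₂` it
kills `e_{h₂}` and `e_{h₁}`, and the other copy of `h₁` kills `0`. -/
def pairShift (h1 h2 : Fin K) (s : Bool) : Fin J → ℝ :=
  structShift (fun t ν =>
    if t = s then
      if ν = h1 then θ (H.item s h1) (basis h2)
      else if ν = h2 then θ (H.item s h2) (basis h1)
      else θ (H.item s ν) (allOne K)
    else θ (H.item t ν) (allZero K)) 0

theorem pairShift_isolates (hne : h1 ≠ h2) (s : Bool) :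
    ∀ α ≠ (fun i => basis h1 i || basis h2 i),
      (∃ j ∈ H.pairKillSet h1 s, θ j α = H.pairShift h1 h2 s j) ∧
        ∃ j ∈ H.pairKillSet h1 s, θb j α = H.pairShift h1 h2 s j := by
  intro α hα
  have hS : ∀ ν, H.item s ν ∈ H.pairKillSet h1 s := fun ν =>
    Finset.mem_insert_of_mem (H.item_mem_copyItems_iff.2 rfl)
  have hS' : H.item (!s) h1 ∈ H.pairKillSet h1 s := Finset.mem_insert_self _ _
  by_cases hle : α ≤ fun i => basis h1 i || basis h2 i
  · rcases eq_of_le_pair hle with rfl | rfl | rfl | rfl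
    · exact ⟨H.exists_mem_eq_structShift 0 hS' (by simp),
        H.exists_mem_eq_structShift 0 hS' (by simp [H.bot_eq])⟩
    · exact ⟨H.exists_mem_eq_structShift 0 (hS h2) (by simp [Ne.symm hne]),
        H.exists_mem_eq_structShift 0 (hS h2) (by simp [Ne.symm hne, H.eq_basis])⟩
    · exact ⟨H.exists_mem_eq_structShift 0 (hS h1) (by simp),
        H.exists_mem_eq_structShift 0 (hS h1) (by simp [H.eq_basis])⟩
    · exact absurd rfl hα
  · obtain ⟨ν, hν, hαν⟩ := exists_eq_false_and_eq_true_of_not_le hle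
    have hν1 : ν ≠ h1 := fun h => by simp [h, basis_self] at hν
    have hν2 : ν ≠ h2 := fun h => by simp [h, basis_self] at hν
    exact ⟨H.exists_mem_eq_structShift 0 (hS ν) (by simp [hν1, hν2, H.item_eq_top hαν]),
      H.exists_mem_eq_structShift 0 (hS ν) (by simp [hν1, hν2, H.item_eq_top' hαν, H.top_eq])⟩

theorem pairShift_ne (hne : h1 ≠ h2) (s : Bool) :
    ∀ j ∈ H.pairKillSet h1 s, θ j (fun i => basis h1 i || basis h2 i) ≠ H.pairShift h1 h2 s j := by
  have hβ : ∀ {ν}, ν = h1 ∨ ν = h2 → θ (H.item s ν) (fun i => basis h1 i || basis h2 i) =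
      θ (H.item s ν) (allOne K) := fun h =>
    H.item_eq_top (by rcases h with rfl | rfl <;> simp [basis_self])
  intro j hj
  rcases Finset.mem_insert.1 hj with rfl | hj
  · rw [pairShift, H.structShift_item, H.item_eq_top (by simp [basis_self])]
    simpa using (H.item_lt_top (α := allZero K) rfl).ne'
  obtain ⟨ν, -, rfl⟩ := Finset.mem_image.1 hj
  rw [pairShift, H.structShift_item]
  by_cases hν1 : ν = h1
  · subst hν1
    simpa [hβ (Or.inl rfl)] using (H.item_lt_top (basis_of_ne hne)).ne'
  by_cases hν2 : ν = h2
  · subst hν2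
    simpa [hν1, hβ (Or.inr rfl)] using (H.item_lt_top (basis_of_ne (Ne.symm hne))).ne'
  · simpa [hν1, hν2] using (H.item_lt_top (by simp [basis_of_ne hν1, basis_of_ne hν2])).ne

theorem eq_pair (H : StandingHyps Q θ θb p pb) (hne : h1 ≠ h2) :
    (∀ j, θ j (fun i => basis h1 i || basis h2 i) = θb j (fun i => basis h1 i || basis h2 i)) ∧
      p (fun i => basis h1 i || basis h2 i) = pb (fun i => basis h1 i || basis h2 i) := by
  have hfree : ∀ s j, j ∉ H.pairKillSet h1 s → θ j _ = θb j _ := fun s _ hj =>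
    eq_of_isolates H.Tp_eq (H.pairShift_isolates hne s) (H.pairShift_ne hne s) (H.p_pos _) hj
  have hp := mul_prod_sub_eq_of_isolates H.Tp_eq (H.pairShift_isolates hne false)
  have hprod := Finset.prod_ne_zero_iff.2 fun j hj => sub_ne_zero.2 (H.pairShift_ne hne false j hj)
  set β : Fin K → Bool := fun i => basis h1 i || basis h2 i with hβ
  have hθ : ∀ j, θ j β = θb j β := by
    intro j
    by_cases hj : (j : ℕ) < 2 * K
    · obtain ⟨t, ν, rfl⟩ := H.exists_item_eq hj
      by_cases hν : ν = h1
      · have hβν : β ν = true := by simp [hβ, hν, basis_self]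
        rw [H.item_eq_top hβν, H.item_eq_top' hβν, H.top_eq]
      · exact hfree (!t) _ (by simp [pairKillSet, H.item_inj, H.item_mem_copyItems_iff, hν])
    · refine hfree false j fun h => notMem_structItems (K := K) (j := j) (by omega) ?_
      rcases Finset.mem_insert.1 h with rfl | h
      exacts [H.item_mem_structItems _ _, H.copyItems_subset false h]
  simp only [← hθ] at hp
  exact ⟨hθ, mul_right_cancel₀ hprod hp⟩

end StandingHyps

theorem step4_two_attribute_eq_general
    {J K : ℕ} (hJ : 2 * K ≤ J) (Q : Fin J → Fin K → Bool)
    (θ θb : Fin J → (Fin K → Bool) → ℝ) (p pb : (Fin K → Bool) → ℝ)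
    (hp : PValid p) (hpb : PValid pb)
    (hR1 : R1 Q θ) (hR1b : R1 Q θb) (hR2 : R2 Q θ) (hR2b : R2 Q θb)
    (hC1 : C1 Q) (hC2 : C2 θ)
    (hT : ∀ r : Fin J → Bool, Tp θ p r = Tp θb pb r) :
    ∀ (h1 h2 : Fin K), h1 < h2 →
      (∀ j : Fin J,
        θ j (fun i => basis h1 i || basis h2 i) = θb j (fun i => basis h1 i || basis h2 i)) ∧
      p (fun i => basis h1 i || basis h2 i) = pb (fun i => basis h1 i || basis h2 i) := by
  intro h1 h2 hlt
  have H : StandingHyps Q θ θb p pb :=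
    ⟨hJ, hC1, hC2, hR1, hR1b, hR2, hR2b, fun α => (hp.1 α).1, fun α => (hpb.1 α).1, hT⟩
  exact H.eq_pair hlt.ne

/-- **Step 4.** Under the standing hypotheses, for all `h₁ < h₂` and every item `j`,
`θ_{j,e_{h₁}+e_{h₂}} = θ̄_{j,e_{h₁}+e_{h₂}}`, and `p_{e_{h₁}+e_{h₂}} = p̄_{e_{h₁}+e_{h₂}}`. -/
theorem step4_two_attribute_eq
    {J K : ℕ} (hJ : 2 * K ≤ J) (Q : Fin J → Fin K → Bool)
    (θ θb : Fin J → (Fin K → Bool) → ℝ) (p pb : (Fin K → Bool) → ℝ)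
    (hθ : ThetaValid θ) (hθb : ThetaValid θb) (hp : PValid p) (hpb : PValid pb)
    (hR1 : R1 Q θ) (hR1b : R1 Q θb) (hR2 : R2 Q θ) (hR2b : R2 Q θb)
    (hC1 : C1 Q) (hC2 : C2 θ)
    (hT : ∀ r : Fin J → Bool, Tp θ p r = Tp θb pb r) :
    ∀ (h1 h2 : Fin K), h1 < h2 →
      (∀ j : Fin J,
        θ j (fun i => basis h1 i || basis h2 i) = θb j (fun i => basis h1 i || basis h2 i)) ∧
      p (fun i => basis h1 i || basis h2 i) = pb (fun i => basis h1 i || basis h2 i) :=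
  step4_two_attribute_eq_general hJ Q θ θb p pb hp hpb hR1 hR1b hR2 hR2b hC1 hC2 hT
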